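/- Let Φ and Ψ be stable linear flows on X = ℝ^d, and assume some h ∈ H_1(X) maps every Φ-orbit onto a Ψ-orbit. Then h(D^Φ) = D^Ψ, where D^Φ and D^Ψ denote the sets of distortion points of Φ and Ψ. -/

import Mathlib

open Filter Topology Matrix Metric
open scoped ENNReal NNReal

noncomputable section

/-- `X = ℝ^d` with the Euclidean norm. -/
abbrev Euc (d : ℕ) : Type := EuclideanSpace ℝ (Fin d)

/-- The time-`t` map `x ↦ exp(tA) x` of the linear flow generated by the matrix `A`. -/
def flowMap {d : ℕ} (A : Matrix (Fin d) (Fin d) ℝ) (t : ℝ) : Euc d →L[ℝ] Euc d :=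
  Matrix.toEuclideanCLM (𝕜 := ℝ) (NormedSpace.exp (t • A))

/-- The linear flow generated by `A`. -/
def linFlow {d : ℕ} (A : Matrix (Fin d) (Fin d) ℝ) (t : ℝ) (x : Euc d) : Euc d :=
  flowMap A t x

/-- The orbit of `x` under the linear flow generated by `A`. -/
def flowOrbit {d : ℕ} (A : Matrix (Fin d) (Fin d) ℝ) (x : Euc d) : Set (Euc d) :=
  Set.range fun t : ℝ => linFlow A t x

/-- `H_0(X)`: homeomorphisms of `X` fixing `0`. -/
def IsH0 {d : ℕ} (h : Euc d ≃ₜ Euc d) : Prop := h 0 = 0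

/-- `H_1(X)`: homeomorphisms fixing `0` such that `h, h⁻¹` are Lipschitz near `0`. -/
def IsH1 {d : ℕ} (h : Euc d ≃ₜ Euc d) : Prop :=
  h 0 = 0 ∧ ∃ r : ℝ, 0 < r ∧ ∃ K : ℝ≥0,
    LipschitzOnWith K (⇑h) (ball (0 : Euc d) r) ∧
    LipschitzOnWith K (⇑h.symm) (ball (0 : Euc d) r)

/-- `H_{1⁻}(X)`: homeomorphisms fixing `0` such that `h, h⁻¹` are `β`-Hölder near `0`
for every `β ∈ (0,1)`. -/
def IsHHolder {d : ℕ} (h : Euc d ≃ₜ Euc d) : Prop :=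
  h 0 = 0 ∧ ∀ β : ℝ, 0 < β → β < 1 → ∃ r : ℝ, 0 < r ∧ ∃ C : ℝ≥0,
    HolderOnWith C β.toNNReal (⇑h) (ball (0 : Euc d) r) ∧
    HolderOnWith C β.toNNReal (⇑h.symm) (ball (0 : Euc d) r)

/-- `H_diff(X)`: homeomorphisms fixing `0` with `h, h⁻¹` differentiable at `0`. -/
def IsHDiff {d : ℕ} (h : Euc d ≃ₜ Euc d) : Prop :=
  h 0 = 0 ∧ DifferentiableAt ℝ (⇑h) 0 ∧ DifferentiableAt ℝ (⇑h.symm) 0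

/-- `H_lin(X)`: linear homeomorphisms. -/
def IsHLin {d : ℕ} (h : Euc d ≃ₜ Euc d) : Prop := IsLinearMap ℝ (⇑h)

/-- `H_pw1(X)`: homeomorphisms fixing `0` that are pointwise Lipschitz at `0`, i.e.
`sup_{x ∈ B_r(0), x ≠ 0} (|h(x)| + |h⁻¹(x)|)/|x| < ∞` for some `r > 0`. -/
def IsHPw1 {d : ℕ} (h : Euc d ≃ₜ Euc d) : Prop :=
  h 0 = 0 ∧ ∃ r : ℝ, 0 < r ∧ ∃ C : ℝ,
    ∀ x ∈ ball (0 : Euc d) r, ‖h x‖ + ‖h.symm x‖ ≤ C * ‖x‖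

/-- `h` maps each orbit of the flow generated by `A` onto an orbit of the flow generated by `B`. -/
def EquivVia {d : ℕ} (A B : Matrix (Fin d) (Fin d) ℝ) (h : Euc d ≃ₜ Euc d) : Prop :=
  ∀ x : Euc d, ⇑h '' flowOrbit A x = flowOrbit B (h x)

/-- `h` conjugates the flows generated by `A` and `B`. -/
def ConjVia {d : ℕ} (A B : Matrix (Fin d) (Fin d) ℝ) (h : Euc d ≃ₜ Euc d) : Prop :=
  ∀ (t : ℝ) (x : Euc d), h (linFlow A t x) = linFlow B t (h x)

def TopEquiv {d : ℕ} (A B : Matrix (Fin d) (Fin d) ℝ) : Prop := ∃ h, IsH0 h ∧ EquivVia A B h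
def HolderEquiv {d : ℕ} (A B : Matrix (Fin d) (Fin d) ℝ) : Prop := ∃ h, IsHHolder h ∧ EquivVia A B h
def LipEquiv {d : ℕ} (A B : Matrix (Fin d) (Fin d) ℝ) : Prop := ∃ h, IsH1 h ∧ EquivVia A B h
def DiffEquiv {d : ℕ} (A B : Matrix (Fin d) (Fin d) ℝ) : Prop := ∃ h, IsHDiff h ∧ EquivVia A B h
def LinEquiv {d : ℕ} (A B : Matrix (Fin d) (Fin d) ℝ) : Prop := ∃ h, IsHLin h ∧ EquivVia A B h
def PwEquiv {d : ℕ} (A B : Matrix (Fin d) (Fin d) ℝ) : Prop := ∃ h, IsHPw1 h ∧ EquivVia A B h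

def TopConj {d : ℕ} (A B : Matrix (Fin d) (Fin d) ℝ) : Prop := ∃ h, IsH0 h ∧ ConjVia A B h
def HolderConj {d : ℕ} (A B : Matrix (Fin d) (Fin d) ℝ) : Prop := ∃ h, IsHHolder h ∧ ConjVia A B h
def LipConj {d : ℕ} (A B : Matrix (Fin d) (Fin d) ℝ) : Prop := ∃ h, IsH1 h ∧ ConjVia A B h
def DiffConj {d : ℕ} (A B : Matrix (Fin d) (Fin d) ℝ) : Prop := ∃ h, IsHDiff h ∧ ConjVia A B h
def LinConj {d : ℕ} (A B : Matrix (Fin d) (Fin d) ℝ) : Prop := ∃ h, IsHLin h ∧ ConjVia A B h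
def PwConj {d : ℕ} (A B : Matrix (Fin d) (Fin d) ℝ) : Prop := ∃ h, IsHPw1 h ∧ ConjVia A B h

/-- Fixed points of the flow generated by `A`. -/
def fixSet {d : ℕ} (A : Matrix (Fin d) (Fin d) ℝ) : Set (Euc d) :=
  {x | ∀ t : ℝ, linFlow A t x = x}

/-- `Per_T`: the `T`-periodic points of the flow generated by `A`. -/
def perSet {d : ℕ} (A : Matrix (Fin d) (Fin d) ℝ) (T : ℝ) : Set (Euc d) :=
  {x | linFlow A T x = x}

/-- The minimal period `T_x = inf {t > 0 : Φ_t x = x} ∈ [0,∞]` (with `inf ∅ = ∞`). -/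
def minPer {d : ℕ} (A : Matrix (Fin d) (Fin d) ℝ) (x : Euc d) : ℝ≥0∞ :=
  sInf ((fun t : ℝ => ENNReal.ofReal t) '' {t : ℝ | 0 < t ∧ linFlow A t x = x})

/-- The central space `X_C = {x : e^{-ε|t|} Φ_t x → 0 as |t| → ∞, for every ε > 0}`. -/
def centralSet {d : ℕ} (A : Matrix (Fin d) (Fin d) ℝ) : Set (Euc d) :=
  {x | ∀ ε : ℝ, 0 < ε →
    Tendsto (fun t : ℝ => Real.exp (-(ε * |t|)) • linFlow A t x) (cocompact ℝ) (𝓝 0)}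

/-- The stable space `X_S = {x : Φ_t x → 0 as t → ∞}`. -/
def stableSet {d : ℕ} (A : Matrix (Fin d) (Fin d) ℝ) : Set (Euc d) :=
  {x | Tendsto (fun t : ℝ => linFlow A t x) atTop (𝓝 0)}

/-- The unstable space `X_U = {x : Φ_t x → 0 as t → -∞}`. -/
def unstableSet {d : ℕ} (A : Matrix (Fin d) (Fin d) ℝ) : Set (Euc d) :=
  {x | Tendsto (fun t : ℝ => linFlow A t x) atBot (𝓝 0)}

/-- A flow is stable if every orbit converges to `0` in forward time. -/
def IsStableFlow {d : ℕ} (A : Matrix (Fin d) (Fin d) ℝ) : Prop := stableSet A = Set.univ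

/-- A flow is hyperbolic if `X = X_S ⊕ X_U`. -/
def IsHyperbolicFlow {d : ℕ} (A : Matrix (Fin d) (Fin d) ℝ) : Prop :=
  (∀ x : Euc d, ∃ y ∈ stableSet A, ∃ z ∈ unstableSet A, x = y + z) ∧
    stableSet A ∩ unstableSet A ⊆ {0}

/-- The continuous linear map on `ℝ^d` induced by a matrix. -/
def matCLM {d : ℕ} (A : Matrix (Fin d) (Fin d) ℝ) : Euc d →L[ℝ] Euc d :=
  Matrix.toEuclideanCLM (𝕜 := ℝ) A

/-- Similarity of square matrices: `A = P⁻¹ B P` for some invertible `P`. -/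
def MatSimilar {n : Type*} [Fintype n] [DecidableEq n] (A B : Matrix n n ℝ) : Prop :=
  ∃ P : (Matrix n n ℝ)ˣ, A = (↑(P⁻¹) : Matrix n n ℝ) * B * (↑P : Matrix n n ℝ)

/-- The generators of the restrictions of the two flows to their central spaces are similar;
this is expressed via a global linear equivalence mapping the central space of `A` onto that of
`B` and intertwining the two generators there. -/
def CentralPartsSimilar {d : ℕ} (A B : Matrix (Fin d) (Fin d) ℝ) : Prop :=
  ∃ P : Euc d ≃ₗ[ℝ] Euc d, ⇑P '' centralSet A = centralSet B ∧
    ∀ x ∈ centralSet A, P (matCLM A x) = matCLM B (P x)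

/-- `d(b)`: the size weight, `1` if `b = 0` and `2` otherwise. -/
def dsz (b : ℝ) : ℕ := if b = 0 then 1 else 2

/-- The real Jordan block `J_m(a+ib)`, of size `m·d(b)`:  for `b = 0` this is `a·I_m + J_m`
(ones on the superdiagonal), and for `b ≠ 0` it is `a·I_{2m} + [[J_m, -b·I_m],[b·I_m, J_m]]`. -/
def jordanBlock (m : ℕ) (a b : ℝ) : Matrix (Fin (m * dsz b)) (Fin (m * dsz b)) ℝ :=
  Matrix.of fun i j =>
    (if (i : ℕ) = (j : ℕ) then a else 0) +
    (if (i : ℕ) + 1 = (j : ℕ) ∧ (j : ℕ) ≠ m then (1 : ℝ) else 0) +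
    (if (j : ℕ) = (i : ℕ) + m then -b else 0) +
    (if (i : ℕ) = (j : ℕ) + m then b else 0)

/-- `ℒJ_m(a+ib)`: equal to `a·I` if `m = 1`, and to `J_m(a+ib)` if `m ≥ 2`. -/
def lipJordanBlock (m : ℕ) (a b : ℝ) : Matrix (Fin (m * dsz b)) (Fin (m * dsz b)) ℝ :=
  if m = 1 then a • (1 : Matrix (Fin (m * dsz b)) (Fin (m * dsz b)) ℝ) else jordanBlock m a b

/-- `𝒦J_m(a+ib)`: equal to `J_m(a)` if `b = 0`, and to `diag[J_m(a), J_m(a)]` if `b ≠ 0`. -/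
def kinJordanBlock (m : ℕ) (a b : ℝ) : Matrix (Fin (m * dsz b)) (Fin (m * dsz b)) ℝ :=
  Matrix.of fun i j =>
    (if (i : ℕ) = (j : ℕ) then a else 0) +
    (if (i : ℕ) + 1 = (j : ℕ) ∧ (j : ℕ) ≠ m then (1 : ℝ) else 0)

/-- Block-diagonal matrix with variable-size blocks, in the given order. -/
def blockDiagAux : ∀ (k : ℕ) (sz : Fin k → ℕ),
    (∀ j, Matrix (Fin (sz j)) (Fin (sz j)) ℝ) →
    Matrix (Fin (∑ j, sz j)) (Fin (∑ j, sz j)) ℝ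
  | 0, _, _ => 0
  | k + 1, sz, M =>
    Matrix.reindex (finSumFinEquiv.trans (finCongr (Fin.sum_univ_succ sz).symm))
      (finSumFinEquiv.trans (finCongr (Fin.sum_univ_succ sz).symm))
      (Matrix.fromBlocks (M 0) 0 0
        (blockDiagAux k (fun j => sz j.succ) (fun j => M j.succ)))

/-- `diag[M_1, …, M_k]` as a `n × n` matrix, where `n = ∑ (size of M_j)`. -/
def blockDiag {k n : ℕ} (sz : Fin k → ℕ) (M : ∀ j, Matrix (Fin (sz j)) (Fin (sz j)) ℝ)
    (h : ∑ j, sz j = n) : Matrix (Fin n) (Fin n) ℝ :=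
  Matrix.reindex (finCongr h) (finCongr h) (blockDiagAux k sz M)

/-- The data of a real Jordan form of total size `n`: block sizes `m j`, eigenvalues
`a j + i (b j)`. -/
structure JordanData (n : ℕ) where
  k : ℕ
  m : Fin k → ℕ
  a : Fin k → ℝ
  b : Fin k → ℝ
  hm : ∀ j, 0 < m j
  hsum : ∑ j, m j * dsz (b j) = n

/-- The block-diagonal matrix `diag[J_{m_1}(z_1), …, J_{m_k}(z_k)]` of a Jordan data. -/
def JordanData.mat {n : ℕ} (D : JordanData n) : Matrix (Fin n) (Fin n) ℝ :=
  blockDiag (fun j => D.m j * dsz (D.b j)) (fun j => jordanBlock (D.m j) (D.a j) (D.b j)) D.hsum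

/-- The matrix `diag[ℒJ_{m_1}(z_1), …, ℒJ_{m_k}(z_k)]` of a Jordan data. -/
def JordanData.lipMat {n : ℕ} (D : JordanData n) : Matrix (Fin n) (Fin n) ℝ :=
  blockDiag (fun j => D.m j * dsz (D.b j)) (fun j => lipJordanBlock (D.m j) (D.a j) (D.b j)) D.hsum

/-- The matrix `diag[𝒦J_{m_1}(z_1), …, 𝒦J_{m_k}(z_k)]` of a Jordan data. -/
def JordanData.kinMat {n : ℕ} (D : JordanData n) : Matrix (Fin n) (Fin n) ℝ :=
  blockDiag (fun j => D.m j * dsz (D.b j)) (fun j => kinJordanBlock (D.m j) (D.a j) (D.b j)) D.hsum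

/-- `A`, `B` are Lipschitz similar: `ℒA` and `ℒB` are similar (via real Jordan forms). -/
def LipSimilar {n : ℕ} (A B : Matrix (Fin n) (Fin n) ℝ) : Prop :=
  ∃ DA DB : JordanData n, MatSimilar A DA.mat ∧ MatSimilar B DB.mat ∧
    MatSimilar DA.lipMat DB.lipMat

/-- `A`, `B` are kinematically similar: `𝒦A` and `𝒦B` are similar (via real Jordan forms). -/
def KinSimilar {n : ℕ} (A B : Matrix (Fin n) (Fin n) ℝ) : Prop :=
  ∃ DA DB : JordanData n, MatSimilar A DA.mat ∧ MatSimilar B DB.mat ∧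
    MatSimilar DA.kinMat DB.kinMat

/-- The Lyapunov space `L(s) = {x : λ₊(x) ≤ s} = {x : ∀ ε > 0, e^{-(s+ε)t} Φ_t x → 0}`. -/
def lyapSpace {d : ℕ} (A : Matrix (Fin d) (Fin d) ℝ) (s : ℝ) : Set (Euc d) :=
  {x | ∀ ε : ℝ, 0 < ε →
    Tendsto (fun t : ℝ => Real.exp (-((s + ε) * t)) • linFlow A t x) atTop (𝓝 0)}

/-- `L(s⁻) = {x : e^{-st} Φ_t x → 0 as t → ∞}`. -/
def lyapSpaceMinus {d : ℕ} (A : Matrix (Fin d) (Fin d) ℝ) (s : ℝ) : Set (Euc d) :=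
  {x | Tendsto (fun t : ℝ => Real.exp (-(s * t)) • linFlow A t x) atTop (𝓝 0)}

/-- The refined Lyapunov space `L_m(s) = {x : Φ_t x / (e^{st} t^m) → 0 as t → ∞}`. -/
def refLyapSpace {d : ℕ} (A : Matrix (Fin d) (Fin d) ℝ) (m : ℕ) (s : ℝ) : Set (Euc d) :=
  {x | Tendsto (fun t : ℝ => (Real.exp (s * t) * t ^ m)⁻¹ • linFlow A t x) atTop (𝓝 0)}

/-- The dimension of a subset of `ℝ^d` (the dimension of its span). -/
def setDim {d : ℕ} (s : Set (Euc d)) : ℕ := Module.finrank ℝ (Submodule.span ℝ s)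

/-- `ℓ(s) = dim L(s)`. -/
def lyapDim {d : ℕ} (A : Matrix (Fin d) (Fin d) ℝ) (s : ℝ) : ℕ := setDim (lyapSpace A s)

/-- `A`, `B` are Lyapunov similar: the generated flows have the same Lyapunov exponents with
matching multiplicities, i.e. `dim L^Φ(s) = dim L^Ψ(s)` for every `s`. -/
def LyapSimilar {d : ℕ} (A B : Matrix (Fin d) (Fin d) ℝ) : Prop :=
  ∀ s : ℝ, lyapDim A s = lyapDim B s

/-- The `j`-th Lyapunov exponent (counted with multiplicity, in increasing order):
`λ_j = inf {s : dim L(s) ≥ j}`. -/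
def nthLyap {d : ℕ} (A : Matrix (Fin d) (Fin d) ℝ) (j : ℕ) : ℝ :=
  sInf {s : ℝ | j ≤ lyapDim A s}

/-- The largest Lyapunov exponent `λ = min {s : L(s) = X}`. -/
def maxLyap {d : ℕ} (A : Matrix (Fin d) (Fin d) ℝ) : ℝ :=
  sInf {s : ℝ | lyapSpace A s = Set.univ}

/-- `m^Φ = min {m : L_m(λ^Φ) = X}`. -/
def mIdx {d : ℕ} (A : Matrix (Fin d) (Fin d) ℝ) : ℕ :=
  sInf {m : ℕ | refLyapSpace A m (maxLyap A) = Set.univ}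

/-- The ratio `|Φ_t x - Φ_{ρ(t)} y| / |Φ_{ρ(t)} y|`, valued in `[0,∞]`. -/
def distortRatio {d : ℕ} (A : Matrix (Fin d) (Fin d) ℝ) (x y : Euc d) (ρ : ℝ → ℝ) (t : ℝ) :
    ℝ≥0∞ :=
  ENNReal.ofReal (‖linFlow A t x - linFlow A (ρ t) y‖ / ‖linFlow A (ρ t) y‖)

/-- `x` is `δ`-distorting for the (stable) flow generated by `A`. -/
def IsDistorting {d : ℕ} (A : Matrix (Fin d) (Fin d) ℝ) (δ : ℝ) (x : Euc d) : Prop :=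
  ∀ ε : ℝ, 0 < ε → ∃ y ∈ ball x ε, y ≠ (0 : Euc d) ∧
    ∀ ρ : ℝ → ℝ, Continuous ρ → Tendsto ρ atTop atTop →
      ENNReal.ofReal δ ≤ limsup (fun t => distortRatio A x y ρ t) atTop

/-- The set `D^Φ` of distortion points. -/
def distortionSet {d : ℕ} (A : Matrix (Fin d) (Fin d) ℝ) : Set (Euc d) :=
  {x | ∃ δ : ℝ, 0 < δ ∧ IsDistorting A δ x}

/-- `τ` is the time reparametrization of the orbit of `x` induced by `h`. -/
def IsReparam {d : ℕ} (A B : Matrix (Fin d) (Fin d) ℝ) (h : Euc d ≃ₜ Euc d) (x : Euc d)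
    (τ : ℝ → ℝ) : Prop :=
  Continuous τ ∧ Function.Bijective τ ∧ τ 0 = 0 ∧
    ∀ t : ℝ, h (linFlow A t x) = linFlow B (τ t) (h x)

/-- The five regularity classes `⋆ ∈ {0, 1⁻, 1, diff, lin}`. -/
inductive StarClass : Type
  | top : StarClass
  | holder : StarClass
  | lip : StarClass
  | diff : StarClass
  | lin : StarClass

/-- Membership in `H_⋆(X)`. -/
def IsHStar {d : ℕ} (s : StarClass) (h : Euc d ≃ₜ Euc d) : Prop :=
  match s with
  | .top => IsH0 h
  | .holder => IsHHolder h
  | .lip => IsH1 h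
  | .diff => IsHDiff h
  | .lin => IsHLin h

/-- The spectrum of a real matrix, as a set of complex numbers. -/
def cSpec {n : ℕ} (A : Matrix (Fin n) (Fin n) ℝ) : Set ℂ :=
  spectrum ℂ (A.map (algebraMap ℝ ℂ))

/-- The class `[A]_1` of generators whose flows are Lipschitz equivalent to that of `A`. -/
def lipClass {d : ℕ} (A : Matrix (Fin d) (Fin d) ℝ) : Set (Matrix (Fin d) (Fin d) ℝ) :=
  {B | LipEquiv A B}

/-- The class `[A]_diff`. -/
def diffClass {d : ℕ} (A : Matrix (Fin d) (Fin d) ℝ) : Set (Matrix (Fin d) (Fin d) ℝ) :=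
  {B | DiffEquiv A B}

/-- The class `[A]_{1⁻}`. -/
def holderClass {d : ℕ} (A : Matrix (Fin d) (Fin d) ℝ) : Set (Matrix (Fin d) (Fin d) ℝ) :=
  {B | HolderEquiv A B}

/-- `diag[J_1(i b_1), …, J_1(i b_k)]`. -/
def rotGen {k n : ℕ} (b : Fin k → ℝ) (h : ∑ j, dsz (b j) = n) : Matrix (Fin n) (Fin n) ℝ :=
  blockDiag (fun j => 1 * dsz (b j)) (fun j => jordanBlock 1 0 (b j)) (by simpa using h)

/-- `diag[J_1(-1 + i b_1), …, J_1(-1 + i b_k)]`. -/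
def negRotGen {k n : ℕ} (b : Fin k → ℝ) (h : ∑ j, dsz (b j) = n) : Matrix (Fin n) (Fin n) ℝ :=
  blockDiag (fun j => 1 * dsz (b j)) (fun j => jordanBlock 1 (-1) (b j)) (by simpa using h)

/-- `diag[J_m(-1 + i b_1), …, J_m(-1 + i b_k)]` (all blocks of equal size `m`). -/
def jmGen {k n : ℕ} (m : ℕ) (b : Fin k → ℝ) (h : m * ∑ j, dsz (b j) = n) :
    Matrix (Fin n) (Fin n) ℝ :=
  blockDiag (fun j => m * dsz (b j)) (fun j => jordanBlock m (-1) (b j))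
    (by rw [← Finset.mul_sum]; exact h)

/-- `diag[J_{m_1}(-1 + i b_1), …, J_{m_k}(-1 + i b_k), A_0]`. -/
def mixedGen {k k0 n : ℕ} (m : Fin k → ℕ) (b : Fin k → ℝ)
    (A0 : Matrix (Fin k0) (Fin k0) ℝ) (h : (∑ j, m j * dsz (b j)) + k0 = n) :
    Matrix (Fin n) (Fin n) ℝ :=
  Matrix.reindex (finSumFinEquiv.trans (finCongr h)) (finSumFinEquiv.trans (finCongr h))
    (Matrix.fromBlocks
      (blockDiag (fun j => m j * dsz (b j)) (fun j => jordanBlock (m j) (-1) (b j)) rfl)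
      0 0 A0)

/-- The operator norm (w.r.t. the Euclidean norm) of a matrix. -/
def opNorm {n : ℕ} (M : Matrix (Fin n) (Fin n) ℝ) : ℝ :=
  ‖Matrix.toEuclideanCLM (𝕜 := ℝ) M‖

end

/-!
A stable linear flow has no periodic orbits, and the norm along an orbit of `x ≠ 0` tends to `0`
in forward and to `∞` in backward time. Hence the orbit map `t ↦ Ψ_t z` lets one read off times
continuously, and an orbit equivalence `h` with `h 0 = 0` induces continuous time changes `τ → ∞`
with `h (Φ_t x) = Ψ_{τ t} (h x)`. Near `0` the bi-Lipschitz bounds on `h` give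
`|a - b| / |b| ≤ K² |h a - h b| / |h b|`, so a `δ`-distorting witness `y` of `x` for `Φ` becomes a
`δ / K²`-distorting witness `h y` of `h x` for `Ψ`; applying this to `h⁻¹` gives the reverse
inclusion.
-/

theorem Matrix.continuous_toEuclideanCLM {𝕜 n : Type*} [RCLike 𝕜] [Fintype n] [DecidableEq n] :
    Continuous (Matrix.toEuclideanCLM (𝕜 := 𝕜) (n := n)) :=
  (Matrix.toEuclideanCLM (𝕜 := 𝕜) (n := n)).toAlgEquiv.toLinearMap.continuous_of_finiteDimensional

section LinearFlow

variable {d : ℕ} (A : Matrix (Fin d) (Fin d) ℝ)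

theorem flowMap_add (s t : ℝ) : flowMap A (s + t) = (flowMap A s).comp (flowMap A t) := by
  rw [flowMap, add_smul,
    Matrix.exp_add_of_commute _ _ (((Commute.refl A).smul_left s).smul_right t), map_mul]
  rfl

theorem linFlow_add (s t : ℝ) (x : Euc d) :
    linFlow A (s + t) x = linFlow A s (linFlow A t x) := by
  simp [linFlow, flowMap_add]

@[simp]
theorem linFlow_zero_left (x : Euc d) : linFlow A 0 x = x := by
  simp [linFlow, flowMap]

@[simp]
theorem linFlow_zero_right (t : ℝ) : linFlow A t 0 = 0 :=
  map_zero _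

theorem linFlow_neg_linFlow (t : ℝ) (x : Euc d) : linFlow A (-t) (linFlow A t x) = x := by
  rw [← linFlow_add, neg_add_cancel, linFlow_zero_left]

@[simp]
theorem linFlow_eq_zero_iff {t : ℝ} {x : Euc d} : linFlow A t x = 0 ↔ x = 0 := by
  refine ⟨fun hx => ?_, fun hx => hx ▸ linFlow_zero_right A t⟩
  rw [← linFlow_neg_linFlow A t x, hx, linFlow_zero_right]

theorem continuous_flowMap : Continuous (flowMap A) := by
  let _ := Matrix.linftyOpNormedRing (n := Fin d) (α := ℝ)
  let _ := Matrix.linftyOpNormedAlgebra (n := Fin d) (R := ℝ) (α := ℝ)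
  exact continuous_toEuclideanCLM.comp
    (continuous_iff_continuousAt.2 fun t => (hasDerivAt_exp_smul_const A t).continuousAt)

theorem continuous_linFlow (x : Euc d) : Continuous fun t => linFlow A t x :=
  (ContinuousLinearMap.apply ℝ (Euc d) x).continuous.comp (continuous_flowMap A)

end LinearFlow

theorem tendsto_clm_of_tendsto_apply {𝕜 E F α : Type*} [NontriviallyNormedField 𝕜]
    [CompleteSpace 𝕜] [NormedAddCommGroup E] [NormedSpace 𝕜 E] [FiniteDimensional 𝕜 E]
    [NormedAddCommGroup F] [NormedSpace 𝕜 F] {f : α → E →L[𝕜] F} {g : E →L[𝕜] F}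
    {l : Filter α} (h : ∀ y, Tendsto (fun a => f a y) l (𝓝 (g y))) : Tendsto f l (𝓝 g) := by
  let e : (E →L[𝕜] F) ≃L[𝕜] Fin (Module.finrank 𝕜 E) → F :=
    ((ContinuousLinearEquiv.ofFinrankEq (Module.finrank_fin_fun 𝕜).symm).arrowCongr
      (1 : F ≃L[𝕜] F)).trans (ContinuousLinearEquiv.piRing _)
  rw [e.toHomeomorph.isInducing.tendsto_nhds_iff, tendsto_pi_nhds]
  exact fun i => h _

theorem continuousAt_of_injective_comp {X Y Z : Type*} [TopologicalSpace X] [TopologicalSpace Y]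
    [TopologicalSpace Z] [T2Space Z] {g : Y → Z} {f : X → Y} {a : X} {K : Set Y}
    (hg : Continuous g) (hinj : Function.Injective g) (hgf : ContinuousAt (g ∘ f) a)
    (hK : IsCompact K) (hfK : ∀ᶠ x in 𝓝 a, f x ∈ K) : ContinuousAt f a :=
  hK.tendsto_nhds_of_unique_mapClusterPt hfK fun _ _ hy =>
    hinj <| eq_of_nhds_neBot <| (hy.continuousAt_comp hg.continuousAt).clusterPt.mono hgf

namespace IsStableFlow

variable {d : ℕ} {A : Matrix (Fin d) (Fin d) ℝ} {z : Euc d} {α : Type*}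

theorem tendsto_linFlow (hA : IsStableFlow A) (x : Euc d) :
    Tendsto (fun t => linFlow A t x) atTop (𝓝 0) :=
  Set.eq_univ_iff_forall.1 hA x

theorem tendsto_flowMap (hA : IsStableFlow A) : Tendsto (flowMap A) atTop (𝓝 0) :=
  tendsto_clm_of_tendsto_apply hA.tendsto_linFlow

theorem tendsto_norm_linFlow_atBot (hA : IsStableFlow A) {z : Euc d} (hz : z ≠ 0) :
    Tendsto (fun s => ‖linFlow A s z‖) atBot atTop := by
  have hz' : 0 < ‖z‖ := norm_pos_iff.2 hz
  have hback (s : ℝ) : ‖z‖ ≤ ‖flowMap A (-s)‖ * ‖linFlow A s z‖ := by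
    conv_lhs => rw [← linFlow_neg_linFlow A s z]
    exact (flowMap A (-s)).le_opNorm _
  have hpos (s : ℝ) : 0 < ‖flowMap A (-s)‖ :=
    pos_of_mul_pos_left (hz'.trans_le (hback s)) (norm_nonneg _)
  have hnorm : Tendsto (fun s => ‖flowMap A (-s)‖) atBot (𝓝[>] 0) :=
    tendsto_nhdsWithin_iff.2 ⟨by simpa using (hA.tendsto_flowMap.comp tendsto_neg_atBot_atTop).norm,
      Eventually.of_forall hpos⟩
  refine tendsto_atTop_mono (fun s => ?_) (hnorm.inv_tendsto_nhdsGT_zero.const_mul_atTop hz')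
  rw [Pi.inv_apply, ← div_eq_mul_inv, div_le_iff₀ (hpos s), mul_comm]
  exact hback s

theorem eq_zero_of_linFlow_eq_self (hA : IsStableFlow A) {T : ℝ} (hT : 0 < T) {x : Euc d}
    (hx : linFlow A T x = x) : x = 0 := by
  have hper (n : ℕ) : linFlow A (n * T) x = x := by
    induction n with
    | zero => simp
    | succ n ih => rw [Nat.cast_succ, add_one_mul, add_comm, linFlow_add, ih, hx]
  exact tendsto_nhds_unique tendsto_const_nhds
    (((hA.tendsto_linFlow x).comp (tendsto_natCast_atTop_atTop.atTop_mul_const hT)).congr hper)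

theorem injective_linFlow (hA : IsStableFlow A) {z : Euc d} (hz : z ≠ 0) :
    Function.Injective fun t => linFlow A t z := by
  have key {s t : ℝ} (hst : s < t) (heq : linFlow A s z = linFlow A t z) : False := by
    refine hz (hA.eq_zero_of_linFlow_eq_self (sub_pos.2 hst) ?_)
    rw [sub_eq_neg_add, linFlow_add, ← heq, linFlow_neg_linFlow]
  intro s t hst
  by_contra hne
  rcases lt_or_gt_of_ne hne with h | h
  exacts [key h hst, key h hst.symm]

theorem exists_pos_le_norm_linFlow (hA : IsStableFlow A) {z : Euc d} (hz : z ≠ 0) (C : ℝ) :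
    ∃ c > 0, ∀ s ≤ C, c ≤ ‖linFlow A s z‖ := by
  obtain ⟨S, hS⟩ := eventually_atBot.1 ((hA.tendsto_norm_linFlow_atBot hz).eventually_ge_atTop 1)
  obtain ⟨s₀, -, hs₀⟩ := (isCompact_Icc (a := min S C) (b := C)).exists_isMinOn
    ⟨C, min_le_right _ _, le_rfl⟩ (continuous_linFlow A z).norm.continuousOn
  refine ⟨min 1 ‖linFlow A s₀ z‖, lt_min one_pos (by simpa using hz), fun s hs => ?_⟩
  rcases le_or_gt s (min S C) with h | h
  · exact (min_le_left _ _).trans (hS s (h.trans (min_le_left _ _)))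
  · exact (min_le_right _ _).trans (hs₀ ⟨h.le, hs⟩)

theorem continuous_of_continuous_linFlow_comp [TopologicalSpace α] (hA : IsStableFlow A)
    (hz : z ≠ 0) {τ : α → ℝ} (hτ : Continuous fun a => linFlow A (τ a) z) : Continuous τ := by
  refine continuous_iff_continuousAt.2 fun a => ?_
  set c := ‖linFlow A (τ a) z‖
  have hc : 0 < c := by simpa [c] using hz
  obtain ⟨S₁, hS₁⟩ := eventually_atTop.1
    ((tendsto_zero_iff_norm_tendsto_zero.1 (hA.tendsto_linFlow z)).eventually_lt_const
      (half_pos hc))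
  obtain ⟨S₀, hS₀⟩ := eventually_atBot.1
    ((hA.tendsto_norm_linFlow_atBot hz).eventually_gt_atTop (2 * c))
  have hnear : ∀ᶠ b in 𝓝 a, ‖linFlow A (τ b) z‖ ∈ Set.Ioo (c / 2) (2 * c) :=
    hτ.norm.continuousAt.eventually_mem (Ioo_mem_nhds (by linarith) (by linarith))
  refine continuousAt_of_injective_comp (continuous_linFlow A z) (hA.injective_linFlow hz)
    hτ.continuousAt (isCompact_Icc (a := S₀) (b := S₁)) (hnear.mono fun b hb => ⟨?_, ?_⟩)
  · by_contra! h
    exact (hS₀ _ h.le).not_gt hb.2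
  · by_contra! h
    exact (hS₁ _ h.le).not_gt hb.1

theorem tendsto_atTop_of_tendsto_linFlow_comp (hA : IsStableFlow A) (hz : z ≠ 0) {τ : α → ℝ}
    {l : Filter α} (hτ : Tendsto (fun a => linFlow A (τ a) z) l (𝓝 0)) : Tendsto τ l atTop := by
  refine tendsto_atTop.2 fun C => ?_
  obtain ⟨c, hc, hcC⟩ := hA.exists_pos_le_norm_linFlow hz C
  filter_upwards [(tendsto_zero_iff_norm_tendsto_zero.1 hτ).eventually_lt_const hc] with a ha
  by_contra! h
  exact (hcC _ h.le).not_gt ha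

end IsStableFlow

namespace EquivVia

variable {d : ℕ} {A B : Matrix (Fin d) (Fin d) ℝ} {h : Euc d ≃ₜ Euc d}

theorem symm (he : EquivVia A B h) : EquivVia B A h.symm := fun z => by
  rw [← h.apply_symm_apply z, ← he, h.symm_apply_apply, h.image_symm, h.preimage_image]

theorem exists_reparam (he : EquivVia A B h) (hA : IsStableFlow A) (hB : IsStableFlow B)
    (h0 : h 0 = 0) (x : Euc d) :
    ∃ τ : ℝ → ℝ, Continuous τ ∧ Tendsto τ atTop atTop ∧
      ∀ t, h (linFlow A t x) = linFlow B (τ t) (h x) := by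
  rcases eq_or_ne x 0 with rfl | hx
  · exact ⟨id, continuous_id, tendsto_id, by simp [h0]⟩
  have hhx : h x ≠ 0 := h0 ▸ h.injective.ne hx
  have horbit (t : ℝ) : ∃ s, linFlow B s (h x) = h (linFlow A t x) := by
    rw [← Set.mem_range, ← flowOrbit, ← he x]
    exact Set.mem_image_of_mem h ⟨t, rfl⟩
  choose τ hτ using horbit
  refine ⟨τ, hB.continuous_of_continuous_linFlow_comp hhx ?_,
    hB.tendsto_atTop_of_tendsto_linFlow_comp hhx ?_, fun t => (hτ t).symm⟩
  · simpa only [hτ, Function.comp_def] using h.continuous.comp (continuous_linFlow A x)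
  · simpa only [hτ, h0, Function.comp_def] using
      (h.continuous.tendsto 0).comp (hA.tendsto_linFlow x)

end EquivVia

theorem norm_sub_mul_norm_le_of_lipschitzOnWith {E F : Type*} [SeminormedAddCommGroup E]
    [SeminormedAddCommGroup F] {f : E → F} {g : F → E} {s : Set E} {t : Set F} {K : ℝ≥0}
    (hf : LipschitzOnWith K f s) (hg : LipschitzOnWith K g t) (hgf : ∀ u, g (f u) = u)
    (hf0 : f 0 = 0) (hs0 : 0 ∈ s) {a b : E} (hb : b ∈ s) (hfa : f a ∈ t)
    (hfb : f b ∈ t) : ‖a - b‖ * ‖f b‖ ≤ K ^ 2 * ‖f a - f b‖ * ‖b‖ := by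
  have hab : ‖a - b‖ ≤ K * ‖f a - f b‖ := by
    simpa only [hgf] using hg.norm_sub_le hfa hfb
  have hb' : ‖f b‖ ≤ K * ‖b‖ := by
    simpa only [hf0, sub_zero] using hf.norm_sub_le hb hs0
  calc ‖a - b‖ * ‖f b‖ ≤ (K * ‖f a - f b‖) * (K * ‖b‖) :=
        mul_le_mul hab hb' (norm_nonneg _) (by positivity)
    _ = K ^ 2 * ‖f a - f b‖ * ‖b‖ := by ring

namespace IsH1

variable {d : ℕ} {h : Euc d ≃ₜ Euc d}

theorem symm (hh : IsH1 h) : IsH1 h.symm := by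
  obtain ⟨h0, r, hr, K, hK, hK'⟩ := hh
  exact ⟨h.symm_apply_eq.2 h0.symm, r, hr, K, hK', hK⟩

theorem exists_eventually_ratio_le (hh : IsH1 h) :
    ∃ K > 0, ∀ᶠ p : Euc d × Euc d in 𝓝 0,
      ‖p.1 - p.2‖ / ‖p.2‖ ≤ K * (‖h p.1 - h p.2‖ / ‖h p.2‖) := by
  obtain ⟨h0, r, hr, L, hL, hL'⟩ := hh
  have hL1 : L ≤ L + 1 := le_self_add
  refine ⟨((L + 1 : ℝ≥0) : ℝ) ^ 2, by positivity, ?_⟩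
  have hball : ball 0 r ∩ h ⁻¹' ball 0 r ∈ 𝓝 (0 : Euc d) :=
    inter_mem (ball_mem_nhds 0 hr)
      (h.continuous.continuousAt.preimage_mem_nhds (by rw [h0]; exact ball_mem_nhds 0 hr))
  rw [← Prod.mk_zero_zero, nhds_prod_eq]
  filter_upwards [prod_mem_prod hball hball] with ⟨a, b⟩ ⟨⟨_, hha⟩, hb, hhb⟩
  rcases eq_or_ne b 0 with rfl | hb0
  · simp [h0] -- both sides vanish, since `x / 0 = 0`
  have hhb0 : h b ≠ 0 := h0 ▸ h.injective.ne hb0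
  rw [mul_div_assoc', div_le_div_iff₀ (norm_pos_iff.2 hb0) (norm_pos_iff.2 hhb0)]
  exact norm_sub_mul_norm_le_of_lipschitzOnWith (hL.weaken hL1) (hL'.weaken hL1) h.symm_apply_apply
    h0 (mem_ball_self hr) hb hha hhb

end IsH1

theorem mem_distortionSet_image {d : ℕ} {A B : Matrix (Fin d) (Fin d) ℝ} {h : Euc d ≃ₜ Euc d}
    (hA : IsStableFlow A) (hB : IsStableFlow B) (hh : IsH1 h) (he : EquivVia A B h) {x : Euc d}
    (hx : x ∈ distortionSet A) : h x ∈ distortionSet B := by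
  obtain ⟨δ, hδ, hxδ⟩ := hx
  obtain ⟨K, hK, hratio⟩ := hh.exists_eventually_ratio_le
  refine ⟨δ / K, div_pos hδ hK, fun ε hε => ?_⟩
  obtain ⟨ε', hε', hball⟩ := Metric.continuous_iff.1 h.continuous x ε hε
  obtain ⟨y, hy, hy0, hyδ⟩ := hxδ ε' hε'
  refine ⟨h y, hball y hy, hh.1 ▸ h.injective.ne hy0, fun ρ hρc hρ => ?_⟩
  obtain ⟨τ, hτc, hτ, hτx⟩ := he.exists_reparam hA hB hh.1 x
  obtain ⟨σ, hσc, hσ, hσy⟩ := he.symm.exists_reparam hB hA hh.symm.1 (h y)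
  have hσy' (s : ℝ) : h (linFlow A (σ s) y) = linFlow B s (h y) := by
    rw [← h.symm_apply_apply y, ← hσy, h.apply_symm_apply, h.symm_apply_apply]
  -- `σ ∘ ρ ∘ τ` is the time change on the `A`-side that matches `ρ` on the `B`-side.
  have hbound : ∀ᶠ t in atTop, distortRatio A x y (σ ∘ ρ ∘ τ) t ≤
      ENNReal.ofReal K * distortRatio B (h x) (h y) ρ (τ t) := by
    have hsmall : Tendsto (fun t => (linFlow A t x, linFlow A (σ (ρ (τ t))) y)) atTop (𝓝 0) :=
      (hA.tendsto_linFlow x).prodMk_nhds ((hA.tendsto_linFlow y).comp (hσ.comp (hρ.comp hτ)))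
    filter_upwards [hsmall.eventually hratio] with t ht
    rw [distortRatio, distortRatio, ← ENNReal.ofReal_mul hK.le]
    refine ENNReal.ofReal_le_ofReal ?_
    simpa only [Function.comp_apply, hτx, hσy'] using ht
  refine (ENNReal.ofReal_div_of_pos hK).trans_le (ENNReal.div_le_of_le_mul' ?_)
  calc ENNReal.ofReal δ ≤ limsup (distortRatio A x y (σ ∘ ρ ∘ τ)) atTop :=
        hyδ _ (hσc.comp (hρc.comp hτc)) (hσ.comp (hρ.comp hτ))
    _ ≤ limsup (fun t => ENNReal.ofReal K * distortRatio B (h x) (h y) ρ (τ t)) atTop :=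
        limsup_le_limsup hbound
    _ = ENNReal.ofReal K * limsup (distortRatio B (h x) (h y) ρ ∘ τ) atTop :=
        ENNReal.limsup_const_mul_of_ne_top ENNReal.ofReal_ne_top
    _ ≤ ENNReal.ofReal K * limsup (distortRatio B (h x) (h y) ρ) atTop :=
        mul_le_mul_right hτ.limsup_comp_le_limsup _

theorem distortionSet_preserved_general (d : ℕ) (A B : Matrix (Fin d) (Fin d) ℝ)
    (hA : IsStableFlow A) (hB : IsStableFlow B)
    (h : Euc d ≃ₜ Euc d) (hh : IsH1 h) (he : EquivVia A B h) :
    ⇑h '' distortionSet A = distortionSet B := by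
  refine Set.Subset.antisymm ?_ fun z hz => ⟨h.symm z, ?_, h.apply_symm_apply z⟩
  · exact Set.image_subset_iff.2 fun x hx => mem_distortionSet_image hA hB hh he hx
  · exact mem_distortionSet_image hB hA hh.symm he.symm hz

/-- **Lemma 3.2**: if two stable linear flows on `ℝ^d` are Lipschitz equivalent via `h`, then
`h` maps the set of distortion points of the first flow onto that of the second. -/
theorem distortionSet_preserved (d : ℕ) (hd : 0 < d) (A B : Matrix (Fin d) (Fin d) ℝ)
    (hA : IsStableFlow A) (hB : IsStableFlow B)
    (h : Euc d ≃ₜ Euc d) (hh : IsH1 h) (he : EquivVia A B h) :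
    ⇑h '' distortionSet A = distortionSet B :=
  distortionSet_preserved_general d A B hA hB h hh he
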